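/- Let X be a simplicial set, G a simplicial group, and τ : X_{>0} → G a twisting function. Let n = k + l with 1 ≤ k ≤ n, and write i ∈ S_{n−1} as i = (i_1, i_2) where i_1 consists of the first l entries and i_2 of the last k−1 entries, so that i_1 ∈ S_{n−1}(p) for p = (0 = p_0 < p_1 < ⋯ < p_k = n) the set left by the removal procedure of i_1 on {0,…,n}, and i_2 ∈ S_{k−1}. Then for every x ∈ X_n, (∂_0)^l Sz_i x = Sz_{i_2} x(p_0, p_1, …, p_k) in G_{k−1}. -/

import Mathlib

open CategoryTheory

/-- `memS n l i` means `i ∈ S_{n,l}`: a sequence of length `l` with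
`0 ≤ i_s ≤ n - s` for `1 ≤ s ≤ l` (here `i.getD t 0` is the entry `i_{t+1}`). -/
def memS (n l : ℕ) (i : List ℕ) : Prop :=
  i.length = l ∧ ∀ t < l, i.getD t 0 + t + 1 ≤ n

/-- The ordered set remaining from `{0, …, n}` after performing the first `r`
removal steps prescribed by `i`: at each step the element at (0-indexed)
position `i_r + 1` of the remaining set is removed. -/
def restAfter (n : ℕ) (i : List ℕ) (r : ℕ) : List ℕ :=
  (i.take r).foldl (fun L a => L.eraseIdx (a + 1)) (List.range (n + 1))

/-- The ordered set remaining from `{0, …, n}` after the whole removal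
procedure prescribed by `i`. -/
def restList (n : ℕ) (i : List ℕ) : List ℕ := restAfter n i i.length

/-- The element `e_{r+1}` removed at (0-indexed) step `r` of the removal
procedure on `{0, …, n}` prescribed by `i`. -/
def elemRemoved (n : ℕ) (i : List ℕ) (r : ℕ) : ℕ :=
  (restAfter n i r).getD (i.getD r 0 + 1) 0

/-- The component `α_s` of `Ψ_p(i)`, for the interval `(a, b) = (p_{s-1}, p_s)`:
the set of (0-indexed) steps at which an element strictly between `a` and `b`
is removed. -/
def psiAlpha (n : ℕ) (i : List ℕ) (a b : ℕ) : Finset ℕ :=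
  (Finset.range i.length).filter
    (fun r => a < elemRemoved n i r ∧ elemRemoved n i r < b)

/-- The component `j_s` of `Ψ_p(i)`, for the interval `(a, b) = (p_{s-1}, p_s)`:
its `u`-th entry is `w - 1` where the `u`-th element of `(a, b)` to be removed
is, at the moment of its removal, the `w`-th smallest element of `(a, b)` still
present. -/
def psiJ (n : ℕ) (i : List ℕ) (a b : ℕ) : List ℕ :=
  ((List.range i.length).filter
      (fun r => decide (a < elemRemoved n i r ∧ elemRemoved n i r < b))).map
    (fun r => ((restAfter n i r).filter
      (fun y => decide (a < y ∧ y < elemRemoved n i r))).length)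

/-- `α` is a `(q_0, …, q_{k-1})`-shuffle: an ordered partition of
`{0, …, q_0 + ⋯ + q_{k-1} - 1}` with `|α_s| = q_s`. -/
def IsShuffleF {k : ℕ} (q : Fin k → ℕ) (α : Fin k → Finset ℕ) : Prop :=
  (∀ s, (α s).card = q s) ∧ (∀ s t, s ≠ t → Disjoint (α s) (α t)) ∧
    Finset.univ.biUnion α = Finset.range (∑ s, q s)

/-- The sign exponent `(α)` of a shuffle: the number of pairs `(a, b)` with
`a ∈ α_s`, `b ∈ α_t`, `s < t` and `a > b`. -/
def shuffleExpN (k : ℕ) (α : ℕ → Finset ℕ) : ℕ :=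
  ∑ s ∈ Finset.range k, ∑ t ∈ Finset.range k,
    if s < t then ∑ a ∈ α s, ((α t).filter (fun b => b < a)).card else 0

/-- Vertex map of the derived operator. -/
def derivedFun (f : ℕ → ℕ) : ℕ → ℕ := fun t => if t = 0 then 0 else f (t - 1) + 1

/-- Vertex map of the face map `δ_j`. -/
def deltaFun (j : ℕ) : ℕ → ℕ := fun t => if t < j then t else t + 1

/-- Vertex map of the degeneracy map `σ_j`. -/
def sigmaFun (j : ℕ) : ℕ → ℕ := fun t => if t ≤ j then t else t - 1

/-- Vertex map of the Szczarba operator `D_i^k`. -/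
def DFun : List ℕ → ℕ → ℕ → ℕ
  | [], _ => id
  | (i1 :: i'), k =>
    if k < i1 then deltaFun (i1 - k) ∘ sigmaFun 0 ∘ derivedFun (DFun i' k)
    else if k = i1 then derivedFun (DFun i' k)
    else sigmaFun 0 ∘ derivedFun (DFun i' (k - 1))

section

open Simplicial

/-- The morphism `[b] ⟶ [a]` in the simplex category whose vertex map is (the
monotone clamped version of) `f`.  When `f` is monotone and maps `[b]` into `[a]`
this is exactly the morphism with vertex map `f`. -/
def mkHomF (a b : ℕ) (f : ℕ → ℕ) : (SimplexCategory.mk b ⟶ SimplexCategory.mk a) :=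
  SimplexCategory.mkHom
    { toFun := fun t => ⟨min ((Finset.range (t.1 + 1)).sup f) a,
        Nat.lt_succ_of_le (min_le_right _ _)⟩
      monotone' := fun u v huv => by
        simp only [Fin.mk_le_mk]
        exact min_le_min
          (Finset.sup_mono (Finset.range_subset_range.mpr (Nat.succ_le_succ huv))) le_rfl }

/-- The natural simplicial operator `X_a → X_b` with vertex map `f : [b] → [a]`. -/
def simpOp (X : SSet) (f : ℕ → ℕ) (a b : ℕ) (x : X _⦋a⦌) : X _⦋b⦌ :=
  X.map (mkHomF a b f).op x

/-- The natural simplicial operator `G_a → G_b` with vertex map `f : [b] → [a]`,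
for a simplicial group `G`. -/
def grpOp (G : CategoryTheory.SimplicialObject GrpCat) (f : ℕ → ℕ) (a b : ℕ)
    (g : G _⦋a⦌) : G _⦋b⦌ :=
  (G.map (mkHomF a b f).op) g

/-- A twisting function `τ : X_{>0} → G`. -/
structure TwistingFn (X : SSet) (G : CategoryTheory.SimplicialObject GrpCat) where
  map : ∀ n : ℕ, X _⦋n + 1⦌ → G _⦋n⦌
  d0 : ∀ (n : ℕ) (x : X _⦋n + 2⦌),
    grpOp G (deltaFun 0) (n + 1) n (map (n + 1) x)
      = (map n (simpOp X (deltaFun 0) (n + 2) (n + 1) x))⁻¹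
        * map n (simpOp X (deltaFun 1) (n + 2) (n + 1) x)
  dk : ∀ (n k : ℕ) (x : X _⦋n + 2⦌), 0 < k → k < n + 2 →
    grpOp G (deltaFun k) (n + 1) n (map (n + 1) x)
      = map n (simpOp X (deltaFun (k + 1)) (n + 2) (n + 1) x)
  sk : ∀ (n k : ℕ) (x : X _⦋n + 1⦌), k < n + 1 →
    grpOp G (sigmaFun k) n (n + 1) (map n x)
      = map (n + 1) (simpOp X (sigmaFun (k + 1)) (n + 1) (n + 2) x)
  s0 : ∀ (n : ℕ) (x : X _⦋n⦌), map n (simpOp X (sigmaFun 0) n (n + 1) x) = 1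

/-- Szczarba's operator `Sz_i : X_{n+1} → G_n`. -/
def Sz {X : SSet} {G : CategoryTheory.SimplicialObject GrpCat} (τ : TwistingFn X G)
    (n : ℕ) (i : List ℕ) (x : X _⦋n + 1⦌) : G _⦋n⦌ :=
  ((List.range (n + 1)).map (fun r =>
    grpOp G (DFun i r) (n - r) n
      ((τ.map (n - r) (simpOp X (fun t => t + r) (n + 1) ((n - r) + 1) x))⁻¹))).prod

/-- The group component of the operator `hatSz_i : X_n → X_n × G_n`. -/
def hatSzG {X : SSet} {G : CategoryTheory.SimplicialObject GrpCat} (τ : TwistingFn X G)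
    (n : ℕ) (i : List ℕ) (x : X _⦋n⦌) : G _⦋n⦌ :=
  ((List.range n).map (fun r =>
    grpOp G (DFun i (r + 1)) (n - (r + 1)) n
      ((τ.map (n - (r + 1)) (simpOp X (fun t => t + r) n ((n - (r + 1)) + 1) x))⁻¹))).prod

/-- Szczarba's operator `hatSz_i : X_n → (X ×_τ G)_n = X_n × G_n`. -/
def hatSz {X : SSet} {G : CategoryTheory.SimplicialObject GrpCat} (τ : TwistingFn X G)
    (n : ℕ) (i : List ℕ) (x : X _⦋n⦌) : X _⦋n⦌ × G _⦋n⦌ :=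
  (simpOp X (DFun i 0) n n x, hatSzG τ n i x)

end

/-- The `r`-fold iterate of the zeroth face map of the twisted Cartesian
product `X ×_τ G`. -/
def twD0pow {X : SSet} {G : CategoryTheory.SimplicialObject GrpCat} (τ : TwistingFn X G) :
    (r : ℕ) → (m : ℕ) → (X : CategoryTheory.SimplicialObject _).obj (Opposite.op (SimplexCategory.mk (m + r))) × ((G : CategoryTheory.SimplicialObject _).obj (Opposite.op (SimplexCategory.mk (m + r))) : Type _) → (X : CategoryTheory.SimplicialObject _).obj (Opposite.op (SimplexCategory.mk (m))) × ((G : CategoryTheory.SimplicialObject _).obj (Opposite.op (SimplexCategory.mk (m))) : Type _)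
  | 0, _, z => z
  | r + 1, m, z =>
      twD0pow τ r m
        (simpOp X (deltaFun 0) (m + r + 1) (m + r) z.1,
         τ.map (m + r) z.1 * grpOp G (deltaFun 0) (m + r + 1) (m + r) z.2)

/-- Vertex map of the iterated degeneracy `s_B` on a finite set `B`. -/
def degenFun (B : Finset ℕ) : ℕ → ℕ := fun t => t - (B.filter (fun b => b < t)).card

/-- The map `Φ : S_n × [n] → S_{n-1} × [n-1]`. -/
def Phi : List ℕ → ℕ → List ℕ × ℕ
  | [], _ => ([], 0)
  | (i1 :: i'), p =>
    if p < i1 then ((i1 - 1) :: (Phi i' p).1, (Phi i' p).2 + 1)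
    else if p = i1 ∨ p = i1 + 1 then (i', 0)
    else (i1 :: (Phi i' (p - 1)).1, (Phi i' (p - 1)).2 + 1)

/-! `Sz_i x` is the product of the factors `D_i^r σ(∂_0^r x)` and `(∂_0)^l` is `∂_0` applied
`l` times, so it suffices to prove `∂_0 Sz_{(a, i')} x = Sz_{i'} (∂_{a+1} x)` and to iterate: the
faces `∂_{a+1}` accumulate to `x(p_0, …, p_k)`. Under `∂_0`, the factor with `r < a` becomes the
`r`-th factor of `Sz_{i'} (∂_{a+1} x)` by `∂_j τ = τ ∂_{j+1}` (`j > 0`), and the one with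
`r > a + 1` becomes the `(r-1)`-st since `∂_0^r = ∂_0^{r-1} ∂_{a+1}`. For `y = ∂_0^a x`, the
relation `∂_0 τ(y) = τ(∂_0 y)⁻¹ τ(∂_1 y)` turns the factors `r = a, a + 1` into
`D_{i'}^a (σ(∂_1 y) σ(∂_0 y)⁻¹)` and `D_{i'}^a σ(∂_0 y)`, whose product is the `a`-th factor. -/

/-- `f` restricts to a monotone map `[b] → [a]`; only then is `f` the vertex map of
`mkHomF a b f`, which in general clamps `f` to a monotone map. -/
structure IsVertexMap (a b : ℕ) (f : ℕ → ℕ) : Prop where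
  mono : ∀ ⦃u v⦄, u ≤ v → v ≤ b → f u ≤ f v
  le : ∀ t ≤ b, f t ≤ a

namespace IsVertexMap

variable {a b c : ℕ} {f g : ℕ → ℕ}

lemma of_monotone (hf : Monotone f) (h : ∀ t ≤ b, f t ≤ a) : IsVertexMap a b f :=
  ⟨fun _ _ huv _ => hf huv, h⟩

lemma comp (hf : IsVertexMap a b f) (hg : IsVertexMap b c g) : IsVertexMap a c (fun t => f (g t)) :=
  ⟨fun _ v huv hv => hf.mono (hg.mono huv hv) (hg.le v hv), fun t ht => hf.le _ (hg.le t ht)⟩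

end IsVertexMap

lemma deltaFun_mono (j : ℕ) : Monotone (deltaFun j) := by
  intro u v h
  unfold deltaFun
  split_ifs <;> omega

lemma isVertexMap_deltaFun (j : ℕ) {a b : ℕ} (h : b + 1 ≤ a) : IsVertexMap a b (deltaFun j) :=
  .of_monotone (deltaFun_mono j) fun t ht => by unfold deltaFun; split_ifs <;> omega

lemma isVertexMap_add_right {a b r : ℕ} (h : b + r ≤ a) : IsVertexMap a b (· + r) :=
  .of_monotone (fun _ _ huv => Nat.add_le_add_right huv r) fun t ht => by omega

section mkHomF

variable {a b c : ℕ} {f g h : ℕ → ℕ}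

lemma mkHomF_apply (hf : IsVertexMap a b f) (t : Fin (b + 1)) :
    ((mkHomF a b f).toOrderHom t : ℕ) = f t := by
  have ht : (t : ℕ) ≤ b := Nat.lt_succ_iff.mp t.isLt
  have hsup : (Finset.range (t + 1)).sup f = f t :=
    le_antisymm
      (Finset.sup_le fun u hu => hf.mono (Nat.lt_succ_iff.mp (Finset.mem_range.mp hu)) ht)
      (Finset.le_sup (Finset.self_mem_range_succ _))
  show min _ a = f t
  rw [hsup, min_eq_left (hf.le t ht)]

lemma mkHomF_congr (hfg : ∀ t ≤ b, f t = g t) : mkHomF a b f = mkHomF a b g := by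
  apply SimplexCategory.Hom.ext; ext t
  show min _ a = min _ a
  congr 1
  exact Finset.sup_congr rfl fun u hu =>
    hfg u ((Nat.lt_succ_iff.mp (Finset.mem_range.mp hu)).trans (Nat.lt_succ_iff.mp t.isLt))

lemma mkHomF_eq_id (hf : ∀ t ≤ a, f t = t) : mkHomF a a f = 𝟙 _ := by
  have hv : IsVertexMap a a f :=
    ⟨fun u v huv hv => by rwa [hf u (huv.trans hv), hf v hv], fun t ht => (hf t ht).trans_le ht⟩
  apply SimplexCategory.Hom.ext; ext t
  rw [mkHomF_apply hv, hf t (Nat.lt_succ_iff.mp t.isLt)]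
  rfl

lemma mkHomF_comp (hf : IsVertexMap a b f) (hg : IsVertexMap b c g)
    (hfg : ∀ t ≤ c, f (g t) = h t) : mkHomF b c g ≫ mkHomF a b f = mkHomF a c h := by
  rw [← mkHomF_congr hfg]
  apply SimplexCategory.Hom.ext; ext t
  have hgt := mkHomF_apply hg t
  simp only [SimplexCategory.comp_toOrderHom, OrderHom.comp_coe, Function.comp_apply]
  rw [mkHomF_apply (hf.comp hg), ← hgt]
  exact mkHomF_apply hf _

end mkHomF

lemma memS_cons {n l a : ℕ} {i : List ℕ} :
    memS (n + 1) (l + 1) (a :: i) ↔ a ≤ n ∧ memS n l i := by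
  constructor
  · rintro ⟨hlen, hi⟩
    refine ⟨by simpa using hi 0 (by omega), by simpa using hlen, fun t ht => ?_⟩
    have := hi (t + 1) (by omega)
    simp only [List.getD_cons_succ] at this
    omega
  · rintro ⟨ha, hlen, hi⟩
    refine ⟨by simp [hlen], fun t ht => ?_⟩
    cases t with
    | zero => simpa using ha
    | succ t =>
      have := hi t (by omega)
      simp only [List.getD_cons_succ]
      omega

section DFun

lemma DFun_mono (i : List ℕ) (k : ℕ) : Monotone (DFun i k) := by
  induction i generalizing k with
  | nil => exact monotone_id
  | cons i1 i ih =>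
    have hσ : Monotone (sigmaFun 0) := fun u v h => by unfold sigmaFun; split_ifs <;> omega
    have hder : ∀ {f : ℕ → ℕ}, Monotone f → Monotone (derivedFun f) := fun hf u v h => by
      unfold derivedFun
      split_ifs <;> first | omega | exact Nat.succ_le_succ (hf (by omega))
    unfold DFun
    split_ifs
    · exact ((deltaFun_mono _).comp hσ).comp (hder (ih k))
    · exact hder (ih k)
    · exact hσ.comp (hder (ih (k - 1)))

variable {i1 k : ℕ} {i : List ℕ}

lemma DFun_cons_zero : DFun (i1 :: i) k 0 = 0 := by
  unfold DFun
  split_ifs with h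
  · simp [derivedFun, sigmaFun, deltaFun, h]
  all_goals simp [derivedFun, sigmaFun]

lemma DFun_cons_succ_of_lt (h : k < i1) (t : ℕ) :
    DFun (i1 :: i) k (t + 1) = deltaFun (i1 - k) (DFun i k t) := by
  simp [DFun, h, derivedFun, sigmaFun]

lemma DFun_cons_self_succ (t : ℕ) : DFun (i1 :: i) i1 (t + 1) = DFun i i1 t + 1 := by
  simp [DFun, derivedFun]

lemma DFun_cons_succ_of_gt (h : i1 < k) (t : ℕ) :
    DFun (i1 :: i) k (t + 1) = DFun i (k - 1) t := by
  simp [DFun, derivedFun, sigmaFun, h.not_gt, h.ne']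

lemma DFun_add_le {n t : ℕ} (hi : memS n n i) (hk : k ≤ n) (ht : t ≤ n) :
    DFun i k t + k ≤ n := by
  induction i generalizing n k t with
  | nil =>
    obtain rfl : n = 0 := hi.1.symm
    simp only [DFun, id]
    omega
  | cons i1 i ih =>
    obtain ⟨n, rfl⟩ : ∃ n', n = n' + 1 :=
      ⟨n - 1, by have := hi.1; simp only [List.length_cons] at this; omega⟩
    obtain ⟨hi1, hi⟩ := memS_cons.mp hi
    rcases t with _ | t
    · rw [DFun_cons_zero]
      omega
    rcases lt_trichotomy k i1 with h | h | h
    · have := ih hi (k := k) (t := t) (by omega) (by omega)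
      rw [DFun_cons_succ_of_lt h]
      unfold deltaFun
      split_ifs <;> omega
    · have := ih hi (k := i1) (t := t) (by omega) (by omega)
      rw [h, DFun_cons_self_succ]
      omega
    · have := ih hi (k := k - 1) (t := t) (by omega) (by omega)
      rw [DFun_cons_succ_of_gt h]
      omega

lemma isVertexMap_DFun {n c : ℕ} (hi : memS n n i) (h : k + c = n) : IsVertexMap c n (DFun i k) :=
  .of_monotone (DFun_mono i k) fun _ ht => by have := DFun_add_le hi (k := k) (by omega) ht; omega

end DFun

lemma prod_map_range_eq_of_mul_succ {M : Type*} [Monoid M] {f g : ℕ → M} {j q : ℕ}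
    (hj : j ≤ q) (hlt : ∀ r < j, f r = g r) (hmul : f j * f (j + 1) = g j)
    (hgt : ∀ r, j + 2 ≤ r → r ≤ q + 1 → f r = g (r - 1)) :
    ((List.range (q + 2)).map f).prod = ((List.range (q + 1)).map g).prod := by
  obtain ⟨d, rfl⟩ : ∃ d, q = j + d := ⟨q - j, by omega⟩
  rw [show j + d + 2 = j + (d + 2) by omega, show j + d + 1 = j + (d + 1) by omega,
    List.range_add (n := j), List.range_add (n := j), List.range_succ_eq_map (n := d + 1),
    List.range_succ_eq_map (n := d)]
  simp only [List.map_append, List.map_cons, List.map_map, List.prod_append, List.prod_cons,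
    Function.comp_def, Nat.succ_eq_add_one, Nat.add_zero]
  rw [← mul_assoc (f j), hmul]
  congr 2
  · exact List.map_congr_left fun r hr => hlt r (List.mem_range.mp hr)
  · refine congrArg List.prod (List.map_congr_left fun r hr => ?_)
    have := List.mem_range.mp hr
    exact (hgt _ (by omega) (by omega)).trans (congrArg g (by omega))

lemma memS_take {n l l' : ℕ} {i : List ℕ} (hi : memS n l i) (hl' : l' ≤ l) :
    memS n l' (i.take l') := by
  refine ⟨by simp [hi.1, hl'], fun t ht => ?_⟩
  have := hi.2 t (by omega)
  simp only [List.getD_eq_getElem?_getD, List.getElem?_take, ht, if_true] at this ⊢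
  exact this

/-- Vertex map of the face `x(p_0, …, p_k)` that the removal procedure `L` leaves. -/
def restFun : List ℕ → ℕ → ℕ
  | [], t => t
  | a :: L, t => deltaFun (a + 1) (restFun L t)

lemma isVertexMap_restFun {a b : ℕ} (L : List ℕ) (h : b + L.length ≤ a) :
    IsVertexMap a b (restFun L) := by
  induction L generalizing a with
  | nil => exact .of_monotone monotone_id fun t ht => by simp only [restFun]; omega
  | cons x L ih =>
    simp only [List.length_cons] at h
    exact (isVertexMap_deltaFun (x + 1) (b := a - 1) (by omega)).comp (ih (by omega))

lemma range_succ_eraseIdx {a j : ℕ} (h : j ≤ a) :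
    (List.range (a + 1)).eraseIdx j = (List.range a).map (deltaFun j) := by
  apply List.ext_getElem
  · simp only [List.length_eraseIdx, List.length_range, List.length_map]
    split_ifs <;> omega
  · intro u _ _
    rw [List.getElem_eraseIdx, List.getElem_map]
    simp only [List.getElem_range, deltaFun]
    split_ifs <;> rfl

lemma foldl_eraseIdx_map {α β : Type*} (g : α → β) (is : List ℕ) (L : List α) :
    is.foldl (fun L a => L.eraseIdx (a + 1)) (L.map g)
      = (is.foldl (fun L a => L.eraseIdx (a + 1)) L).map g := by
  induction is generalizing L with
  | nil => rfl
  | cons a is ih => simp only [List.foldl_cons, List.eraseIdx_map, ih]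

lemma restList_cons {n a : ℕ} (L : List ℕ) (ha : a ≤ n) :
    restList (n + 1) (a :: L) = (restList n L).map (deltaFun (a + 1)) := by
  simp only [restList, restAfter, List.take_length, List.foldl_cons]
  rw [range_succ_eraseIdx (by omega), foldl_eraseIdx_map]

lemma restList_eq_map_restFun (m : ℕ) (L : List ℕ) (hL : memS (m + L.length) L.length L) :
    restList (m + L.length) L = (List.range (m + 1)).map (restFun L) := by
  induction L with
  | nil => simp [restList, restAfter, restFun]
  | cons a L ih =>
    obtain ⟨ha, hL⟩ := (memS_cons (n := m + L.length)).mp hL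
    rw [List.length_cons, ← Nat.add_assoc, restList_cons L ha, ih hL, List.map_map]
    rfl

open Simplicial

section Operators

variable {X : SSet} {G : SimplicialObject GrpCat} {a b c : ℕ} {f g h : ℕ → ℕ}

lemma simpOp_congr (hfg : ∀ t ≤ b, f t = g t) (x : X _⦋a⦌) :
    simpOp X f a b x = simpOp X g a b x := by
  rw [simpOp, mkHomF_congr hfg, simpOp]

lemma grpOp_congr (hfg : ∀ t ≤ b, f t = g t) (x : G _⦋a⦌) :
    grpOp G f a b x = grpOp G g a b x := by
  rw [grpOp, mkHomF_congr hfg, grpOp]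

lemma simpOp_eq_self (hf : ∀ t ≤ a, f t = t) (x : X _⦋a⦌) : simpOp X f a a x = x := by
  rw [simpOp, mkHomF_eq_id hf, op_id, Functor.map_id_apply]

lemma grpOp_eq_self (hf : ∀ t ≤ a, f t = t) (x : G _⦋a⦌) : grpOp G f a a x = x := by
  rw [grpOp, mkHomF_eq_id hf, op_id, G.map_id]
  rfl

lemma simpOp_simpOp (hf : IsVertexMap a b f) (hg : IsVertexMap b c g)
    (hfg : ∀ t ≤ c, f (g t) = h t) (x : X _⦋a⦌) :
    simpOp X g b c (simpOp X f a b x) = simpOp X h a c x := by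
  rw [simpOp, simpOp, simpOp, ← mkHomF_comp hf hg hfg, op_comp, Functor.map_comp_apply]

lemma simpOp_simpOp_comm {b' : ℕ} {f' g' : ℕ → ℕ} (hf : IsVertexMap a b f)
    (hg : IsVertexMap b c g) (hf' : IsVertexMap a b' f') (hg' : IsVertexMap b' c g')
    (hfg : ∀ t ≤ c, f (g t) = f' (g' t)) (x : X _⦋a⦌) :
    simpOp X g b c (simpOp X f a b x) = simpOp X g' b' c (simpOp X f' a b' x) := by
  rw [simpOp_simpOp hf hg hfg, simpOp_simpOp hf' hg' fun _ _ => rfl]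

lemma grpOp_grpOp (hf : IsVertexMap a b f) (hg : IsVertexMap b c g)
    (hfg : ∀ t ≤ c, f (g t) = h t) (x : G _⦋a⦌) :
    grpOp G g b c (grpOp G f a b x) = grpOp G h a c x := by
  rw [grpOp, grpOp, grpOp, ← mkHomF_comp hf hg hfg, op_comp, G.map_comp]
  rfl

lemma grpOp_mul (x y : G _⦋a⦌) : grpOp G f a b (x * y) = grpOp G f a b x * grpOp G f a b y :=
  map_mul _ _ _

lemma grpOp_inv (x : G _⦋a⦌) : grpOp G f a b x⁻¹ = (grpOp G f a b x)⁻¹ :=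
  map_inv _ _

lemma grpOp_list_prod (L : List (G _⦋a⦌)) :
    grpOp G f a b L.prod = (L.map (grpOp G f a b)).prod :=
  map_list_prod _ _

end Operators

namespace TwistingFn

variable {X : SSet} {G : SimplicialObject GrpCat} (τ : TwistingFn X G) {c : ℕ}

lemma grpOp_face_inv_of_pos {j : ℕ} (hj0 : 0 < j) (hj : j < c + 2) (y : X _⦋c + 2⦌) :
    grpOp G (deltaFun j) (c + 1) c (τ.map (c + 1) y)⁻¹
      = (τ.map c (simpOp X (deltaFun (j + 1)) (c + 2) (c + 1) y))⁻¹ := by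
  rw [grpOp_inv, τ.dk c j y hj0 hj]

lemma grpOp_face_zero_inv (y : X _⦋c + 2⦌) :
    grpOp G (deltaFun 0) (c + 1) c (τ.map (c + 1) y)⁻¹
      = (τ.map c (simpOp X (deltaFun 1) (c + 2) (c + 1) y))⁻¹
        * τ.map c (simpOp X (deltaFun 0) (c + 2) (c + 1) y) := by
  rw [grpOp_inv, τ.d0, mul_inv_rev, inv_inv]

end TwistingFn

section Szczarba

variable {X : SSet} {G : SimplicialObject GrpCat} (τ : TwistingFn X G)

/-- The `r`-th factor `D_i^r σ(∂_0^r x)` of `Sz_i x`. -/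
def szFactor (n : ℕ) (i : List ℕ) (x : X _⦋n + 1⦌) (r : ℕ) : G _⦋n⦌ :=
  grpOp G (DFun i r) (n - r) n
    ((τ.map (n - r) (simpOp X (fun t => t + r) (n + 1) ((n - r) + 1) x))⁻¹)

lemma Sz_eq_prod_szFactor (n : ℕ) (i : List ℕ) (x : X _⦋n + 1⦌) :
    Sz τ n i x = ((List.range (n + 1)).map (szFactor τ n i x)).prod :=
  rfl

variable {τ}

lemma szFactor_of_add_eq {n r c : ℕ} (h : r + c = n) (i : List ℕ) (x : X _⦋n + 1⦌) :
    szFactor τ n i x r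
      = grpOp G (DFun i r) c n ((τ.map c (simpOp X (fun t => t + r) (n + 1) (c + 1) x))⁻¹) := by
  subst h
  rw [szFactor, Nat.add_sub_cancel_left]

lemma grpOp_face_zero_szFactor {n r c : ℕ} {i : List ℕ} (hi : memS (n + 1) (n + 1) i)
    (h : r + c = n + 1) (x : X _⦋n + 2⦌) :
    grpOp G (deltaFun 0) (n + 1) n (szFactor τ (n + 1) i x r)
      = grpOp G (fun t => DFun i r (t + 1)) c n
          ((τ.map c (simpOp X (fun t => t + r) (n + 2) (c + 1) x))⁻¹) := by
  rw [szFactor_of_add_eq h, grpOp_grpOp (isVertexMap_DFun hi h) (isVertexMap_deltaFun 0 le_rfl)]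
  intro t _
  simp [deltaFun]

variable {m i1 : ℕ} {i : List ℕ}

lemma grpOp_face_zero_szFactor_cons_of_lt {r : ℕ} (hi : memS (m + 1) (m + 1) (i1 :: i))
    (hr : r < i1) (x : X _⦋m + 2⦌) :
    grpOp G (deltaFun 0) (m + 1) m (szFactor τ (m + 1) (i1 :: i) x r)
      = szFactor τ m i (simpOp X (deltaFun (i1 + 1)) (m + 2) (m + 1) x) r := by
  obtain ⟨hi1, hi'⟩ := memS_cons.mp hi
  obtain ⟨c, rfl⟩ : ∃ c, m = r + c := ⟨m - r, by omega⟩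
  have hx : simpOp X (deltaFun (i1 - r + 1)) (c + 2) (c + 1)
        (simpOp X (· + r) (r + c + 2) (c + 2) x)
      = simpOp X (· + r) (r + c + 1) (c + 1)
        (simpOp X (deltaFun (i1 + 1)) (r + c + 2) (r + c + 1) x) :=
    simpOp_simpOp_comm (isVertexMap_add_right (by omega)) (isVertexMap_deltaFun _ (by omega))
      (isVertexMap_deltaFun _ (by omega)) (isVertexMap_add_right (by omega))
      (fun t _ => by simp only [deltaFun]; split_ifs <;> omega) x
  rw [grpOp_face_zero_szFactor hi (c := c + 1) (by omega), szFactor_of_add_eq rfl,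
    ← grpOp_grpOp (isVertexMap_deltaFun (i1 - r) le_rfl) (isVertexMap_DFun hi' rfl)
      fun t _ => (DFun_cons_succ_of_lt hr t).symm,
    τ.grpOp_face_inv_of_pos (j := i1 - r) (by omega) (by omega), hx]

lemma grpOp_face_zero_szFactor_cons_self_mul_succ (hi : memS (m + 1) (m + 1) (i1 :: i))
    (x : X _⦋m + 2⦌) :
    grpOp G (deltaFun 0) (m + 1) m (szFactor τ (m + 1) (i1 :: i) x i1)
        * grpOp G (deltaFun 0) (m + 1) m (szFactor τ (m + 1) (i1 :: i) x (i1 + 1))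
      = szFactor τ m i (simpOp X (deltaFun (i1 + 1)) (m + 2) (m + 1) x) i1 := by
  obtain ⟨hi1, hi'⟩ := memS_cons.mp hi
  obtain ⟨c, rfl⟩ : ∃ c, m = i1 + c := ⟨m - i1, by omega⟩
  have hx1 : simpOp X (deltaFun 1) (c + 2) (c + 1) (simpOp X (· + i1) (i1 + c + 2) (c + 2) x)
      = simpOp X (· + i1) (i1 + c + 1) (c + 1)
        (simpOp X (deltaFun (i1 + 1)) (i1 + c + 2) (i1 + c + 1) x) :=
    simpOp_simpOp_comm (isVertexMap_add_right (by omega)) (isVertexMap_deltaFun _ (by omega))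
      (isVertexMap_deltaFun _ (by omega)) (isVertexMap_add_right (by omega))
      (fun t _ => by simp only [deltaFun]; split_ifs <;> omega) x
  have hx0 : simpOp X (deltaFun 0) (c + 2) (c + 1) (simpOp X (· + i1) (i1 + c + 2) (c + 2) x)
      = simpOp X (· + (i1 + 1)) (i1 + c + 2) (c + 1) x :=
    simpOp_simpOp (isVertexMap_add_right (by omega)) (isVertexMap_deltaFun _ (by omega))
      (fun t _ => by simp only [deltaFun]; split_ifs <;> omega) x
  rw [grpOp_face_zero_szFactor hi (r := i1) (c := c + 1) (by omega),
    grpOp_face_zero_szFactor hi (r := i1 + 1) (c := c) (by omega), szFactor_of_add_eq rfl,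
    ← grpOp_grpOp (isVertexMap_deltaFun 0 le_rfl) (isVertexMap_DFun hi' rfl)
      fun t _ => by simp [DFun_cons_self_succ, deltaFun],
    τ.grpOp_face_zero_inv, hx1, hx0,
    grpOp_congr (f := fun t => DFun (i1 :: i) (i1 + 1) (t + 1)) (g := DFun i i1) fun t _ => by
      rw [DFun_cons_succ_of_gt (Nat.lt_add_one i1), Nat.add_sub_cancel]]
  simp only [grpOp_mul, grpOp_inv, mul_inv_cancel_right]

lemma grpOp_face_zero_szFactor_cons_of_gt {r : ℕ} (hi : memS (m + 1) (m + 1) (i1 :: i))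
    (hr : i1 + 2 ≤ r) (hrm : r ≤ m + 1) (x : X _⦋m + 2⦌) :
    grpOp G (deltaFun 0) (m + 1) m (szFactor τ (m + 1) (i1 :: i) x r)
      = szFactor τ m i (simpOp X (deltaFun (i1 + 1)) (m + 2) (m + 1) x) (r - 1) := by
  obtain ⟨hi1, hi'⟩ := memS_cons.mp hi
  obtain ⟨s, rfl⟩ : ∃ s, r = s + 1 := ⟨r - 1, by omega⟩
  obtain ⟨c, rfl⟩ : ∃ c, m = s + c := ⟨m - s, by omega⟩
  have hx : simpOp X (· + s) (s + c + 1) (c + 1)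
        (simpOp X (deltaFun (i1 + 1)) (s + c + 2) (s + c + 1) x)
      = simpOp X (· + (s + 1)) (s + c + 2) (c + 1) x :=
    simpOp_simpOp (isVertexMap_deltaFun _ (by omega)) (isVertexMap_add_right (by omega))
      (fun t _ => by simp only [deltaFun]; split_ifs <;> omega) x
  rw [grpOp_face_zero_szFactor hi (r := s + 1) (c := c) (by omega), Nat.add_sub_cancel,
    szFactor_of_add_eq rfl, hx]
  exact grpOp_congr (fun t _ => by rw [DFun_cons_succ_of_gt (by omega), Nat.add_sub_cancel]) _

theorem grpOp_face_zero_Sz_cons (hi : memS (m + 1) (m + 1) (i1 :: i)) (x : X _⦋m + 2⦌) :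
    grpOp G (deltaFun 0) (m + 1) m (Sz τ (m + 1) (i1 :: i) x)
      = Sz τ m i (simpOp X (deltaFun (i1 + 1)) (m + 2) (m + 1) x) := by
  rw [Sz_eq_prod_szFactor, Sz_eq_prod_szFactor, grpOp_list_prod, List.map_map]
  exact prod_map_range_eq_of_mul_succ (memS_cons.mp hi).1
    (fun r hr => grpOp_face_zero_szFactor_cons_of_lt hi hr x)
    (grpOp_face_zero_szFactor_cons_self_mul_succ hi x)
    (fun r hr hrm => grpOp_face_zero_szFactor_cons_of_gt hi hr hrm x)

theorem grpOp_add_right_Sz {k l : ℕ} (hi : memS (k + l) (k + l) i) (x : X _⦋k + l + 1⦌) :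
    grpOp G (· + l) (k + l) k (Sz τ (k + l) i x)
      = Sz τ k (i.drop l) (simpOp X (restFun (i.take l)) (k + l + 1) (k + 1) x) := by
  induction l generalizing i with
  | zero =>
    show grpOp G (· + 0) k k (Sz τ k i x) = Sz τ k i (simpOp X (restFun []) (k + 1) (k + 1) x)
    rw [grpOp_eq_self (f := (· + 0)) fun _ _ => rfl,
      simpOp_eq_self (f := restFun []) fun _ _ => rfl]
  | succ l ih =>
    obtain _ | ⟨i1, i⟩ := i
    · exact absurd hi.1 (by simp)
    have hi' := (memS_cons (n := k + l) (l := k + l)).mp hi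
    have hlen : (i.take l).length = l := by simp [hi'.2.1]
    calc grpOp G (· + (l + 1)) (k + (l + 1)) k (Sz τ (k + (l + 1)) (i1 :: i) x)
        = grpOp G (· + l) (k + l) k
            (grpOp G (deltaFun 0) (k + l + 1) (k + l) (Sz τ (k + l + 1) (i1 :: i) x)) :=
          (grpOp_grpOp (isVertexMap_deltaFun 0 le_rfl) (isVertexMap_add_right le_rfl)
            (fun t _ => by simp [deltaFun, Nat.add_assoc]) _).symm
      _ = grpOp G (· + l) (k + l) k
            (Sz τ (k + l) i (simpOp X (deltaFun (i1 + 1)) (k + l + 2) (k + l + 1) x)) := by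
          rw [grpOp_face_zero_Sz_cons (m := k + l) hi]
      _ = Sz τ k (i.drop l) (simpOp X (restFun (i.take l)) (k + l + 1) (k + 1)
            (simpOp X (deltaFun (i1 + 1)) (k + l + 2) (k + l + 1) x)) := ih hi'.2 _
      _ = Sz τ k (i.drop l) (simpOp X (restFun (i1 :: i.take l)) (k + l + 2) (k + 1) x) := by
          rw [simpOp_simpOp (isVertexMap_deltaFun _ le_rfl) (isVertexMap_restFun _ (by omega))
            fun _ _ => rfl]
          rfl

end Szczarba

open Simplicial in
/-- Here the paper's `k` is `k + 1`. -/
theorem szczarba_Sz_d0_pow_general (X : SSet) (G : CategoryTheory.SimplicialObject GrpCat)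
    (τ : TwistingFn X G) (k l : ℕ) (i : List ℕ) (hi : memS (k + l) (k + l) i)
    (p : ℕ → ℕ)
    (hrest : restList (k + l + 1) (i.take l) = (List.range (k + 2)).map p)
    (x : X _⦋k + l + 1⦌) :
    grpOp G (fun t => t + l) (k + l) k (Sz τ (k + l) i x)
      = Sz τ k (i.drop l) (simpOp X p (k + l + 1) (k + 1) x) := by
  have hlen : (i.take l).length = l := by simp [hi.1]
  have htake : memS (k + 1 + (i.take l).length) (i.take l).length (i.take l) := by
    obtain ⟨h1, h2⟩ := memS_take hi (l' := l) (by omega)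
    rw [hlen]
    exact ⟨h1, fun t ht => (h2 t ht).trans (by omega)⟩
  have hp : (List.range (k + 2)).map p = (List.range (k + 2)).map (restFun (i.take l)) := by
    rw [← hrest, ← restList_eq_map_restFun (k + 1) _ htake, hlen, Nat.add_right_comm]
  rw [grpOp_add_right_Sz hi, simpOp_congr fun t ht =>
    (List.map_inj_left.mp hp t (List.mem_range.mpr (by omega))).symm]

open Simplicial in
/-- (Lemma 4.3, first identity.)  Let `n = k + l` with
`1 ≤ k ≤ n` (here the paper's `k` is `k + 1`), write `i ∈ S_{n-1}` as
`i = (i_1, i_2)` with `i_1` the first `l` entries, and assume the removal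
procedure of `i_1` on `{0, …, n}` leaves exactly `{p_0, …, p_k}`.  Then for
every `x ∈ X_n`:  `(∂_0)^l Sz_i x = Sz_{i_2} x(p_0, p_1, …, p_k)`. -/
theorem szczarba_Sz_d0_pow (X : SSet) (G : CategoryTheory.SimplicialObject GrpCat)
    (τ : TwistingFn X G) (k l : ℕ) (i : List ℕ) (hi : memS (k + l) (k + l) i)
    (p : ℕ → ℕ) (hp0 : p 0 = 0) (hpk : p (k + 1) = k + l + 1)
    (hmono : ∀ s < k + 1, p s < p (s + 1))
    (hrest : restList (k + l + 1) (i.take l) = (List.range (k + 2)).map p)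
    (x : X _⦋k + l + 1⦌) :
    grpOp G (fun t => t + l) (k + l) k (Sz τ (k + l) i x)
      = Sz τ k (i.drop l) (simpOp X p (k + l + 1) (k + 1) x) :=
  szczarba_Sz_d0_pow_general X G τ k l i hi p hrest x
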